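/- arXiv:1202.0219 — 3 statements merged into one kernel-verified Lean document; each statement's English description precedes it below -/
import Mathlib

section
/- Summation formula: 𝔊_{n,q}^{(α)}(x,y) = ∑_{k=0}^n [n choose k]_q 𝔊_{k,q}^{(α)} (x+y)_q^{n-k}, where (x+y)_q^m = ∑_{j=0}^m [m choose j]_q q^{j(j-1)/2} x^{m-j} y^j and 𝔊_{k,q}^{(α)} = 𝔊_{k,q}^{(α)}(0,0). -/
open PowerSeries Finset

/-- The `q`-integer `[n]_q = 1 + q + ⋯ + q^(n-1)`. -/
noncomputable def qInt (q : ℂ) (n : ℕ) : ℂ := ∑ i ∈ Finset.range n, q ^ i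

/-- The `q`-factorial `[n]_q!`. -/
noncomputable def qFact (q : ℂ) : ℕ → ℂ
  | 0 => 1
  | n + 1 => qFact q n * qInt q (n + 1)

/-- The Gaussian (`q`-binomial) coefficient. -/
noncomputable def qBinom (q : ℂ) (n k : ℕ) : ℂ := qFact q n / (qFact q k * qFact q (n - k))

/-- The formal power series `e_q(tx) = ∑ x^n t^n/[n]_q!`. -/
noncomputable def qExpSeries (q : ℂ) (x : ℂ) : PowerSeries ℂ :=
  PowerSeries.mk fun n => x ^ n / qFact q n

/-- The formal power series `E_q(ty) = ∑ q^(n(n-1)/2) y^n t^n/[n]_q!`. -/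
noncomputable def qExpSeries' (q : ℂ) (y : ℂ) : PowerSeries ℂ :=
  PowerSeries.mk fun n => q ^ (n * (n - 1) / 2) * y ^ n / qFact q n

/-- Generating series `(2t/(e_q(t)+1))^α e_q(tx) E_q(ty)` of the `q`-Genocchi polynomials. -/
noncomputable def qGenocchiSeries (q : ℂ) (α : ℕ) (x y : ℂ) : PowerSeries ℂ :=
  (PowerSeries.C (2 : ℂ) * PowerSeries.X * (qExpSeries q 1 + 1)⁻¹) ^ α *
    qExpSeries q x * qExpSeries' q y

/-- The `q`-Genocchi polynomial `𝔊_{n,q}^{(α)}(x,y)`. -/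
noncomputable def qGenocchi (q : ℂ) (α : ℕ) (x y : ℂ) (n : ℕ) : ℂ :=
  qFact q n * PowerSeries.coeff n (qGenocchiSeries q α x y)

/-- The `q`-Bernoulli polynomial `𝔅_{n,q}(x,y)`, defined via
`(t/(e_q(t)-1)) e_q(tx) E_q(ty) = ∑ 𝔅_{n,q}(x,y) t^n/[n]_q!`
(note `t/(e_q(t)-1)` is the inverse of the series `∑ t^n/[n+1]_q!`). -/
noncomputable def qBernoulli (q : ℂ) (x y : ℂ) (n : ℕ) : ℂ :=
  qFact q n * PowerSeries.coeff n
    ((PowerSeries.mk fun k => (qFact q (k + 1))⁻¹)⁻¹ * qExpSeries q x * qExpSeries' q y)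

/-- The Gauss polynomial `(x+y)_q^n = ∑_k [n k]_q q^(k(k-1)/2) x^(n-k) y^k`. -/
noncomputable def qAddPow (q : ℂ) (x y : ℂ) (n : ℕ) : ℂ :=
  ∑ k ∈ Finset.range (n + 1), qBinom q n k * q ^ (k * (k - 1) / 2) * x ^ (n - k) * y ^ k

/-
The generating series factors as `𝔊^{(α)}(t) · e_q(tx) E_q(ty)`, where `𝔊^{(α)}(t)` is the
series at `x = y = 0`. Both factors are `q`-exponential generating functions, of the numbers
`𝔊_{k,q}^{(α)}` and of the Gauss polynomials `(x+y)_q^m` respectively, and the coefficients of a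
product of `q`-exponential generating functions are `q`-binomial convolutions.
-/

noncomputable def qEgf (q : ℂ) (f : ℕ → ℂ) : PowerSeries ℂ :=
  PowerSeries.mk fun n => f n / qFact q n

lemma qFact_ne_zero {q : ℂ} (hq : ∀ n : ℕ, qInt q (n + 1) ≠ 0) (n : ℕ) :
    qFact q n ≠ 0 := by
  induction n with
  | zero => simp [qFact]
  | succ m ih => exact mul_ne_zero ih (hq m)

lemma coeff_qEgf_mul_qEgf {q : ℂ} (hq : ∀ n : ℕ, qInt q (n + 1) ≠ 0)
    (f g : ℕ → ℂ) (n : ℕ) :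
    coeff n (qEgf q f * qEgf q g) =
      (∑ k ∈ range (n + 1), qBinom q n k * f k * g (n - k)) / qFact q n := by
  rw [coeff_mul, Nat.sum_antidiagonal_eq_sum_range_succ_mk, sum_div]
  refine sum_congr rfl fun k _ => ?_
  simp only [qEgf, coeff_mk, qBinom]
  field_simp [qFact_ne_zero hq n, qFact_ne_zero hq k, qFact_ne_zero hq (n - k)]

lemma qEgf_qFact_mul_coeff {q : ℂ} (hq : ∀ n : ℕ, qInt q (n + 1) ≠ 0)
    (P : PowerSeries ℂ) :
    qEgf q (fun n => qFact q n * coeff n P) = P := by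
  ext n
  simp [qEgf, qFact_ne_zero hq n]

lemma qExpSeries_mul_qExpSeries' {q : ℂ} (hq : ∀ n : ℕ, qInt q (n + 1) ≠ 0) (x y : ℂ) :
    qExpSeries q x * qExpSeries' q y = qEgf q (qAddPow q x y) := by
  ext m
  have hm : (qExpSeries' q y * qExpSeries q x).coeff m = _ :=
    coeff_qEgf_mul_qEgf hq (fun k => q ^ (k * (k - 1) / 2) * y ^ k) (fun k => x ^ k) m
  rw [mul_comm, hm, qEgf, coeff_mk, qAddPow]
  congr 1
  exact sum_congr rfl fun k _ => by ring

lemma qGenocchiSeries_eq_mul (q : ℂ) (α : ℕ) (x y : ℂ) :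
    qGenocchiSeries q α x y = qGenocchiSeries q α 0 0 * (qExpSeries q x * qExpSeries' q y) := by
  have h₁ : qExpSeries q 0 = 1 := by
    ext n; cases n <;> simp [qExpSeries, qFact]
  have h₂ : qExpSeries' q 0 = 1 := by
    ext n; cases n <;> simp [qExpSeries', qFact]
  simp only [qGenocchiSeries, h₁, h₂]
  ring

/-- Summation formula: `𝔊_{n,q}^{(α)}(x,y) = ∑_k [n k]_q 𝔊_{k,q}^{(α)} (x+y)_q^(n-k)`. -/
theorem qGenocchi_sum_formula (q : ℂ) (hq : ∀ n : ℕ, qInt q (n + 1) ≠ 0)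
    (α n : ℕ) (x y : ℂ) :
    qGenocchi q α x y n =
      ∑ k ∈ Finset.range (n + 1),
        qBinom q n k * qGenocchi q α 0 0 k * qAddPow q x y (n - k) := by
  have hseries :
      qGenocchiSeries q α x y = qEgf q (qGenocchi q α 0 0) * qEgf q (qAddPow q x y) := by
    rw [qGenocchiSeries_eq_mul, qExpSeries_mul_qExpSeries' hq]
    exact congrArg (· * _) (qEgf_qFact_mul_coeff hq _).symm
  rw [qGenocchi, hseries, coeff_qEgf_mul_qEgf hq, mul_div_cancel₀ _ (qFact_ne_zero hq n)]
end

section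
/- Difference equation: 𝔊_{n,q}^{(α)}(x,0) + 𝔊_{n,q}^{(α)}(x,-1) = 2[n]_q 𝔊_{n-1,q}^{(α-1)}(x,-1) for n ≥ 1 and α ≥ 1. -/
open PowerSeries Finset

lemma qInt_zero (q : ℂ) : qInt q 0 = 0 := by
  simp [qInt]

lemma qInt_add (q : ℂ) (a b : ℕ) : qInt q (a + b) = qInt q a + q ^ a * qInt q b := by
  simp only [qInt, Finset.sum_range_add, pow_add, Finset.mul_sum]

lemma qInt_mul_coeff_succ_qExpSeries {q : ℂ} (hq : ∀ n : ℕ, qInt q (n + 1) ≠ 0) (x : ℂ)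
    (n : ℕ) :
    qInt q (n + 1) * coeff (n + 1) (qExpSeries q x) = x * coeff n (qExpSeries q x) := by
  have := qFact_ne_zero hq n
  simp only [qExpSeries, coeff_mk, qFact]
  field_simp [hq n]
  ring

lemma qInt_mul_coeff_succ_qExpSeries' {q : ℂ} (hq : ∀ n : ℕ, qInt q (n + 1) ≠ 0) (y : ℂ)
    (n : ℕ) :
    qInt q (n + 1) * coeff (n + 1) (qExpSeries' q y) = q ^ n * y * coeff n (qExpSeries' q y) := by
  have := qFact_ne_zero hq n
  simp only [qExpSeries', coeff_mk, qFact, Nat.triangle_succ]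
  field_simp [hq n]
  ring

lemma qInt_mul_coeff_succ_qExpSeries_mul {q : ℂ} (hq : ∀ n : ℕ, qInt q (n + 1) ≠ 0)
    (x y : ℂ) (N : ℕ) :
    qInt q (N + 1) * coeff (N + 1) (qExpSeries q x * qExpSeries' q y) =
      (x + q ^ N * y) * coeff N (qExpSeries q x * qExpSeries' q y) := by
  set a := fun i => coeff i (qExpSeries q x)
  set b := fun j => coeff j (qExpSeries' q y)
  have split : qInt q (N + 1) * ∑ p ∈ antidiagonal (N + 1), a p.1 * b p.2 =
      ∑ p ∈ antidiagonal (N + 1), qInt q p.1 * a p.1 * b p.2 +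
        ∑ p ∈ antidiagonal (N + 1), q ^ p.1 * a p.1 * (qInt q p.2 * b p.2) := by
    rw [Finset.mul_sum, ← Finset.sum_add_distrib]
    refine Finset.sum_congr rfl fun p hp => ?_
    rw [← mem_antidiagonal.mp hp, qInt_add]
    ring
  have shift_a : ∑ p ∈ antidiagonal (N + 1), qInt q p.1 * a p.1 * b p.2 =
      x * ∑ p ∈ antidiagonal N, a p.1 * b p.2 := by
    rw [Finset.Nat.sum_antidiagonal_succ, qInt_zero, Finset.mul_sum]
    simp only [a, qInt_mul_coeff_succ_qExpSeries hq]
    ring_nf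
  have shift_b : ∑ p ∈ antidiagonal (N + 1), q ^ p.1 * a p.1 * (qInt q p.2 * b p.2) =
      q ^ N * y * ∑ p ∈ antidiagonal N, a p.1 * b p.2 := by
    rw [Finset.Nat.sum_antidiagonal_succ', qInt_zero, Finset.mul_sum]
    simp only [b, qInt_mul_coeff_succ_qExpSeries' hq, zero_mul, mul_zero, zero_add]
    refine Finset.sum_congr rfl fun p hp => ?_
    rw [← mem_antidiagonal.mp hp, pow_add]
    ring
  rw [coeff_mul, coeff_mul, split, shift_a, shift_b]
  ring

lemma qExpSeries_mul_qExpSeries'_neg {q : ℂ} (hq : ∀ n : ℕ, qInt q (n + 1) ≠ 0) (x : ℂ) :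
    qExpSeries q x * qExpSeries' q (-x) = 1 := by
  ext N
  induction N with
  | zero => simp [qExpSeries, qExpSeries', qFact]
  | succ N ih =>
    have step := qInt_mul_coeff_succ_qExpSeries_mul hq x (-x) N
    rw [coeff_one, if_neg N.succ_ne_zero]
    refine (mul_eq_zero.mp ?_).resolve_left (hq N)
    rcases N with _ | N
    · simpa using step
    · rw [step, ih, coeff_one, if_neg (Nat.succ_ne_zero N), mul_zero]

lemma qExpSeries'_zero (q : ℂ) : qExpSeries' q 0 = 1 := by
  ext n
  cases n <;> simp [qExpSeries', qFact, coeff_one]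

lemma qGenocchiSeries_succ_add {q : ℂ} (hq : ∀ n : ℕ, qInt q (n + 1) ≠ 0) (a : ℕ) (x : ℂ) :
    qGenocchiSeries q (a + 1) x 0 + qGenocchiSeries q (a + 1) x (-1) =
      C (2 : ℂ) * X * qGenocchiSeries q a x (-1) := by
  set e := qExpSeries q 1
  set E := qExpSeries' q (-1)
  set F := C (2 : ℂ) * X * (e + 1)⁻¹
  have F_mul : F * (e + 1) = C (2 : ℂ) * X := by
    have : constantCoeff (e + 1) ≠ 0 := by simp [e, qExpSeries, qFact]
    rw [mul_assoc, PowerSeries.inv_mul_cancel _ this, mul_one]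
  have one_add_E : 1 + E = E * (e + 1) := by
    rw [mul_add, mul_comm, qExpSeries_mul_qExpSeries'_neg hq, mul_one, add_comm]
  calc F ^ (a + 1) * qExpSeries q x * qExpSeries' q 0 + F ^ (a + 1) * qExpSeries q x * E
      = F ^ a * qExpSeries q x * E * (F * (e + 1)) := by
        rw [qExpSeries'_zero, ← mul_add, one_add_E, pow_succ]; ring
    _ = C (2 : ℂ) * X * (F ^ a * qExpSeries q x * E) := by rw [F_mul]; ring

/-- Difference equation: `𝔊_{n,q}^{(α)}(x,0) + 𝔊_{n,q}^{(α)}(x,-1) = 2[n]_q 𝔊_{n-1,q}^{(α-1)}(x,-1)`. -/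
theorem qGenocchi_difference_eq' (q : ℂ) (hq : ∀ n : ℕ, qInt q (n + 1) ≠ 0)
    (α n : ℕ) (hα : 1 ≤ α) (hn : 1 ≤ n) (x : ℂ) :
    qGenocchi q α x 0 n + qGenocchi q α x (-1) n =
      2 * qInt q n * qGenocchi q (α - 1) x (-1) (n - 1) := by
  obtain ⟨a, rfl⟩ : ∃ a, α = a + 1 := ⟨α - 1, by omega⟩
  obtain ⟨m, rfl⟩ : ∃ m, n = m + 1 := ⟨n - 1, by omega⟩
  simp only [qGenocchi, Nat.add_sub_cancel]
  rw [← mul_add, ← map_add, qGenocchiSeries_succ_add hq, mul_assoc, coeff_C_mul,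
    coeff_succ_X_mul, qFact]
  ring
end

section
/- For the classical Genocchi and Bernoulli polynomials, G_n(x+y) = ∑_{k=0}^n C(n,k) (2/(k+1)) ((k+1) y^k − G_{k+1}(y)) B_{n-k}(x) for all n ∈ ℕ₀. -/
open PowerSeries Finset

/-- The exponential series `e^{tx} = ∑ x^n t^n/n!` over `ℚ`. -/
noncomputable def expS (x : ℚ) : PowerSeries ℚ :=
  PowerSeries.mk fun n => x ^ n / n.factorial

/-- The classical Genocchi polynomial `G_n(x)`, defined by
`(2t/(e^t+1)) e^{tx} = ∑ G_n(x) t^n/n!`. -/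
noncomputable def GenocchiPoly (x : ℚ) (n : ℕ) : ℚ :=
  n.factorial * PowerSeries.coeff (R := ℚ) n
    (PowerSeries.C (R := ℚ) 2 * PowerSeries.X * (expS 1 + 1)⁻¹ * expS x)

/-- The classical Bernoulli polynomial `B_n(x)`, defined by
`(t/(e^t-1)) e^{tx} = ∑ B_n(x) t^n/n!`
(note `t/(e^t-1)` is the inverse of the series `∑ t^n/(n+1)!`). -/
noncomputable def BernoulliPoly (x : ℚ) (n : ℕ) : ℚ :=
  n.factorial * PowerSeries.coeff (R := ℚ) n
    ((PowerSeries.mk fun k => ((k + 1).factorial : ℚ)⁻¹)⁻¹ * expS x)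

/-!
With `S(t) = 2t/(e^t+1)` and `E(t) = (e^t-1)/t`, factor
`S(t) e^{t(x+y)} = (S(t) e^{ty} E(t)) · (E(t)⁻¹ e^{tx})`.
The second factor generates `B_n(x)`, and the first one generates
`(2/(k+1)) ((k+1) y^k - G_{k+1}(y))`, because
`t · S(t) e^{ty} E(t) = S(t) e^{ty} (e^t - 1) = 2t e^{ty} - 2 S(t) e^{ty}`.
Multiplying exponential generating functions convolves their coefficients binomially.
-/

open scoped Nat

theorem factorial_mul_coeff_mul {R : Type*} [CommSemiring R] (f g : R⟦X⟧) (n : ℕ) :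
    n ! * coeff n (f * g) =
      ∑ k ∈ range (n + 1), n.choose k * (k ! * coeff k f) * ((n - k)! * coeff (n - k) g) := by
  rw [coeff_mul, Nat.sum_antidiagonal_eq_sum_range_succ_mk, mul_sum]
  refine sum_congr rfl fun k hk => ?_
  rw [← Nat.choose_mul_factorial_mul_factorial (Nat.le_of_lt_succ (mem_range.1 hk))]
  push_cast
  ring

theorem coeff_expS (x : ℚ) (n : ℕ) : coeff n (expS x) = x ^ n / n ! :=
  coeff_mk _ _

theorem expS_mul_expS (x y : ℚ) : expS x * expS y = expS (x + y) := by
  have expS_eq_rescale (z : ℚ) : expS z = rescale z (exp ℚ) := by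
    ext n
    simp [coeff_expS, div_eq_mul_inv, mul_comm]
  simp only [expS_eq_rescale, exp_mul_exp_eq_exp_add]

noncomputable def genocchiGF : ℚ⟦X⟧ := C 2 * X * (expS 1 + 1)⁻¹

noncomputable def expSubOneDivX : ℚ⟦X⟧ := mk fun k => ((k + 1)! : ℚ)⁻¹

theorem genocchiPoly_eq_coeff (y : ℚ) (n : ℕ) :
    GenocchiPoly y n = n ! * coeff n (genocchiGF * expS y) :=
  rfl

theorem bernoulliPoly_eq_coeff (x : ℚ) (n : ℕ) :
    BernoulliPoly x n = n ! * coeff n (expSubOneDivX⁻¹ * expS x) :=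
  rfl

theorem X_mul_expSubOneDivX : X * expSubOneDivX = expS 1 - 1 := by
  ext (_ | m)
  · simp [expS, expSubOneDivX]
  · simp [coeff_succ_X_mul, expSubOneDivX, coeff_expS, coeff_one, div_eq_mul_inv]

theorem expSubOneDivX_mul_inv : expSubOneDivX * expSubOneDivX⁻¹ = 1 :=
  PowerSeries.mul_inv_cancel _ (by simp [← coeff_zero_eq_constantCoeff_apply, expSubOneDivX])

theorem genocchiGF_mul_expS_one_add_one : genocchiGF * (expS 1 + 1) = C 2 * X := by
  have h : constantCoeff (expS 1 + 1) ≠ 0 := by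
    rw [map_add, map_one, ← coeff_zero_eq_constantCoeff_apply, coeff_expS]
    norm_num
  rw [genocchiGF, mul_assoc, PowerSeries.inv_mul_cancel _ h, mul_one]

theorem X_mul_genocchiGF_mul_expS_mul_expSubOneDivX (y : ℚ) :
    X * (genocchiGF * expS y * expSubOneDivX) =
      C 2 * X * expS y - C 2 * (genocchiGF * expS y) := by
  calc X * (genocchiGF * expS y * expSubOneDivX)
      = genocchiGF * expS y * (X * expSubOneDivX) := by ring
    _ = genocchiGF * (expS 1 + 1) * expS y - 2 * (genocchiGF * expS y) := by
        rw [X_mul_expSubOneDivX]; ring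
    _ = C 2 * X * expS y - C 2 * (genocchiGF * expS y) := by
        rw [genocchiGF_mul_expS_one_add_one, map_ofNat]

theorem factorial_mul_coeff_genocchiGF_mul_expS_mul_expSubOneDivX (y : ℚ) (k : ℕ) :
    k ! * coeff k (genocchiGF * expS y * expSubOneDivX) =
      2 / (k + 1) * ((k + 1) * y ^ k - GenocchiPoly y (k + 1)) := by
  have h := congrArg (coeff (k + 1)) (X_mul_genocchiGF_mul_expS_mul_expSubOneDivX y)
  rw [coeff_succ_X_mul, map_sub, coeff_C_mul, mul_assoc (C 2), coeff_C_mul, coeff_succ_X_mul,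
    coeff_expS] at h
  rw [h, genocchiPoly_eq_coeff, Nat.factorial_succ]
  push_cast
  field_simp

/-- `G_n(x+y) = ∑_k C(n,k) (2/(k+1)) ((k+1) y^k − G_{k+1}(y)) B_{n-k}(x)`. -/
theorem genocchi_bernoulli_relation (n : ℕ) (x y : ℚ) :
    GenocchiPoly (x + y) n =
      ∑ k ∈ Finset.range (n + 1),
        (n.choose k : ℚ) * (2 / (k + 1)) *
          ((k + 1) * y ^ k - GenocchiPoly y (k + 1)) * BernoulliPoly x (n - k) := by
  have factorization : genocchiGF * expS (x + y) =
      (genocchiGF * expS y * expSubOneDivX) * (expSubOneDivX⁻¹ * expS x) := by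
    calc genocchiGF * expS (x + y)
        = (expSubOneDivX * expSubOneDivX⁻¹) * (genocchiGF * (expS y * expS x)) := by
          rw [expSubOneDivX_mul_inv, one_mul, expS_mul_expS, add_comm]
      _ = _ := by ring
  rw [genocchiPoly_eq_coeff, factorization, factorial_mul_coeff_mul]
  refine sum_congr rfl fun k _ => ?_
  rw [factorial_mul_coeff_genocchiGF_mul_expS_mul_expSubOneDivX, bernoulliPoly_eq_coeff]
  ring
end
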